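/- arXiv:2011.06975 — 2 statements merged into one kernel-verified Lean document; each statement's English description precedes it below -/
import Mathlib

section
/- Let α₁, …, α_N be pairwise distinct complex numbers of modulus 1 and c₁, …, c_N ∈ ℂ with c₁ ≠ 0, and set f(z) = Σ_{k=1}^N c_k log(1 - α_k z). Then lim sup_{|z|→1⁻} (1-|z|²)|f'(z)| ≥ 2|c₁| > 0; in particular f does not belong to the little Bloch space. -/
/-!
Along the radius `z = r α₀⁻¹` towards the singularity `α₀⁻¹` of `f` one has
`(1 - r²) f'(z) = -∑ₖ cₖ αₖ (1 - r²) / (1 - αₖ α₀⁻¹ r)`. The `k = 0` term equals `-(1 + r) c₀ α₀`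
and tends to `-2 c₀ α₀`, while every other term tends to `0` because `αₖ α₀⁻¹ ≠ 1`. So the
Bloch quantity `(1 - |z|²) |f'(z)|` tends to `2 |c₀| > 0` along this radius.
-/

open Filter Topology Complex

theorem hasDerivAt_log_one_sub_mul {a z : ℂ} (h : ‖a * z‖ < 1) :
    HasDerivAt (fun w => log (1 - a * w)) (-a / (1 - a * z)) z := by
  have hslit : 1 - a * z ∈ slitPlane := by
    simpa [sub_eq_add_neg] using mem_slitPlane_of_norm_lt_one (z := -(a * z)) (by rwa [norm_neg])
  simpa using (((hasDerivAt_id z).const_mul a).const_sub 1).clog hslit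

theorem deriv_sum_mul_log_one_sub_mul {ι : Type*} [Fintype ι] (c α : ι → ℂ) {z : ℂ}
    (h : ∀ k, ‖α k * z‖ < 1) :
    deriv (fun w => ∑ k, c k * log (1 - α k * w)) z = ∑ k, c k * (-α k / (1 - α k * z)) :=
  (HasDerivAt.fun_sum fun k _ => (hasDerivAt_log_one_sub_mul (h k)).const_mul (c k)).deriv

theorem tendsto_one_sub_sq_div_one_sub_mul (γ : ℂ) :
    Tendsto (fun r : ℝ => (1 - (r : ℂ) ^ 2) / (1 - γ * r)) (𝓝[<] 1)
      (𝓝 (if γ = 1 then 2 else 0)) := by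
  split_ifs with hγ
  · subst hγ
    have hlin : Tendsto (fun r : ℝ => 1 + (r : ℂ)) (𝓝[<] 1) (𝓝 2) := by
      have : Tendsto (fun r : ℝ => 1 + (r : ℂ)) (𝓝 1) (𝓝 (1 + ((1 : ℝ) : ℂ))) :=
        tendsto_const_nhds.add (continuous_ofReal.tendsto 1)
      norm_num at this
      exact this.mono_left nhdsWithin_le_nhds
    refine hlin.congr' ?_
    filter_upwards [self_mem_nhdsWithin] with r (hr : r < 1)
    have : (1 : ℂ) - r ≠ 0 := sub_ne_zero.2 (by exact_mod_cast hr.ne')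
    field_simp
    ring
  · have hden : (1 : ℂ) - γ * (1 : ℝ) ≠ 0 := by simpa [sub_eq_zero] using Ne.symm hγ
    have : ContinuousAt (fun r : ℝ => (1 - (r : ℂ) ^ 2) / (1 - γ * r)) 1 := by
      fun_prop (disch := exact hden)
    simpa using this.tendsto.mono_left nhdsWithin_le_nhds

theorem exists_norm_near_one_of_tendsto_radial {F : ℂ → ℂ} {β L : ℂ} (hβ : ‖β‖ = 1)
    (hF : Tendsto (fun r : ℝ => (1 - (r : ℂ) ^ 2) * F (r * β)) (𝓝[<] 1) (𝓝 L))
    {ε δ : ℝ} (hε : 0 < ε) (hδ : 0 < δ) :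
    ∃ z : ℂ, ‖z‖ < 1 ∧ 1 - δ < ‖z‖ ∧ ‖L‖ - ε < (1 - ‖z‖ ^ 2) * ‖F z‖ := by
  have hclose := hF.norm.eventually (eventually_gt_nhds (sub_lt_self ‖L‖ hε))
  have hnear : ∀ᶠ r : ℝ in 𝓝[<] 1, 1 - δ < r :=
    eventually_nhdsWithin_of_eventually_nhds (eventually_gt_nhds (sub_lt_self 1 hδ))
  have hpos : ∀ᶠ r : ℝ in 𝓝[<] 1, r ∈ Set.Ioo 0 1 := Ioo_mem_nhdsLT one_pos
  obtain ⟨r, hr, hrδ, hrL⟩ := (hpos.and (hnear.and hclose)).exists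
  have hnorm : ‖(r : ℂ) * β‖ = r := by simp [hβ, abs_of_pos hr.1]
  have hfactor : ‖1 - (r : ℂ) ^ 2‖ = 1 - r ^ 2 := by
    rw [← ofReal_pow, ← ofReal_one, ← ofReal_sub, norm_real, Real.norm_of_nonneg]
    nlinarith [hr.1, hr.2]
  refine ⟨r * β, by rw [hnorm]; exact hr.2, by rw [hnorm]; exact hrδ, ?_⟩
  rwa [hnorm, ← hfactor, ← norm_mul]

theorem tendsto_radial_deriv_sum_mul_log_one_sub_mul {ι : Type*} [Fintype ι]
    (c : ι → ℂ) {α : ι → ℂ} (hα : ∀ k, ‖α k‖ = 1) (hinj : Function.Injective α) (j : ι) :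
    Tendsto (fun r : ℝ => (1 - (r : ℂ) ^ 2) *
        deriv (fun w => ∑ k, c k * log (1 - α k * w)) (r * (α j)⁻¹))
      (𝓝[<] 1) (𝓝 (-2 * c j * α j)) := by
  classical
  have hαj : α j ≠ 0 := norm_ne_zero_iff.1 (by rw [hα j]; exact one_ne_zero)
  have hpole : ∀ k, α k * (α j)⁻¹ = 1 ↔ k = j := fun k => by
    rw [mul_inv_eq_one₀ hαj, hinj.eq_iff]
  have hterms := tendsto_finsetSum Finset.univ fun k _ =>
    (tendsto_one_sub_sq_div_one_sub_mul (α k * (α j)⁻¹)).const_mul (-(c k * α k))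
  have hsum : ∑ k, -(c k * α k) * (if α k * (α j)⁻¹ = 1 then (2 : ℂ) else 0) =
      -2 * c j * α j := by
    simp only [hpole, mul_ite, mul_zero, Finset.sum_ite_eq', Finset.mem_univ, if_true]
    ring
  rw [hsum] at hterms
  refine hterms.congr' ?_
  filter_upwards [Ioo_mem_nhdsLT one_pos] with r hr
  have hinside : ∀ k, ‖α k * (r * (α j)⁻¹)‖ < 1 := fun k => by
    simpa [hα, abs_of_pos hr.1] using hr.2
  rw [deriv_sum_mul_log_one_sub_mul c α hinside, Finset.mul_sum]
  refine Finset.sum_congr rfl fun k _ => ?_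
  ring

theorem stmt7 (N : ℕ) (α c : Fin (N + 1) → ℂ)
    (hα : ∀ k, ‖α k‖ = 1) (hinj : Function.Injective α)
    (hc : c 0 ≠ 0)
    (f : ℂ → ℂ) (hf : f = fun z => ∑ k, c k * Complex.log (1 - α k * z)) :
    (∀ ε : ℝ, 0 < ε → ∀ δ : ℝ, 0 < δ →
      ∃ z : ℂ, ‖z‖ < 1 ∧ 1 - δ < ‖z‖ ∧
        2 * ‖c 0‖ - ε < (1 - ‖z‖ ^ 2) * ‖deriv f z‖) ∧
    ¬ (∀ ε : ℝ, 0 < ε → ∃ δ : ℝ, 0 < δ ∧ ∀ z : ℂ, ‖z‖ < 1 →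
        1 - δ < ‖z‖ → (1 - ‖z‖ ^ 2) * ‖deriv f z‖ < ε) := by
  subst hf
  have hradial := tendsto_radial_deriv_sum_mul_log_one_sub_mul c hα hinj 0
  have hlimit : ‖-2 * c 0 * α 0‖ = 2 * ‖c 0‖ := by simp [hα]
  have hlower : ∀ ε : ℝ, 0 < ε → ∀ δ : ℝ, 0 < δ → ∃ z : ℂ, ‖z‖ < 1 ∧ 1 - δ < ‖z‖ ∧
      2 * ‖c 0‖ - ε < (1 - ‖z‖ ^ 2) * ‖deriv (fun z => ∑ k, c k * log (1 - α k * z)) z‖ :=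
    fun ε hε δ hδ => hlimit ▸ exists_norm_near_one_of_tendsto_radial (by simp [hα]) hradial hε hδ
  refine ⟨hlower, fun hbloch => ?_⟩
  have hc0 : 0 < ‖c 0‖ := norm_pos_iff.2 hc
  obtain ⟨δ, hδ, hsmall⟩ := hbloch _ hc0
  obtain ⟨z, hz, hzδ, hbig⟩ := hlower _ hc0 δ hδ
  linarith [hsmall z hz hzδ]
end

section
/- If A is a subalgebra of the Bloch space B (under pointwise multiplication) that is closed in the Bloch norm, then every element of A is a bounded function on the unit disk. -/
noncomputable def blochSet (f : ℂ → ℂ) : Set ℝ :=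
  (fun z : ℂ => (1 - ‖z‖ ^ 2) * ‖deriv f z‖) '' Metric.ball 0 1

noncomputable def blochDist (f g : ℂ → ℂ) : ℝ :=
  ‖f 0 - g 0‖ + sSup (blochSet (fun z => f z - g z))

/-!
Multiplication by `f ∈ A` is a linear operator on `A`. The Bloch space is complete (locally
uniform limits of holomorphic functions are holomorphic, with converging derivatives), so `A`
is a Banach space, and since Bloch convergence implies pointwise convergence on the disc the
operator has closed graph, hence is bounded by some `C`. Then
`|f z| ^ (n + 1) = |f ^ (n + 1) z| ≤ K_z ‖f ^ (n + 1)‖ ≤ K_z C ^ n ‖f‖` for all `n`,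
which forces `|f z| ≤ C`.
-/

open Metric Filter Topology BoundedContinuousFunction

open LinearMap in
/-- The closed graph theorem for the operator `Φ x ↦ Φ (T x)` on the range of `Φ`. -/
theorem exists_pos_bound_of_closed_graph {𝕜 S V : Type*} [NontriviallyNormedField 𝕜]
    [AddCommGroup S] [Module 𝕜 S] [NormedAddCommGroup V] [NormedSpace 𝕜 V] [CompleteSpace V]
    (Φ : S →ₗ[𝕜] V) (T : S →ₗ[𝕜] S) (hΦ : IsClosed (Set.range Φ))
    (hT : ∀ (x : ℕ → S) (y z : S), Tendsto (fun n => Φ (x n)) atTop (𝓝 (Φ y)) →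
      Tendsto (fun n => Φ (T (x n))) atTop (𝓝 (Φ z)) → Φ (T y) = Φ z) :
    ∃ C, 0 < C ∧ ∀ x, ‖Φ (T x)‖ ≤ C * ‖Φ x‖ := by
  -- `hT` for the constant sequence `0` makes the operator well defined
  have hker : ker Φ ≤ ker (Φ ∘ₗ T) := fun y hy => by
    simpa using hT (fun _ => 0) y 0 (by simp [mem_ker.mp hy]) (by simp)
  rw [← coe_range] at hΦ
  have : CompleteSpace (range Φ) := hΦ.completeSpace_coe
  let M : range Φ →ₗ[𝕜] V := (ker Φ).liftQ (Φ ∘ₗ T) hker ∘ₗ Φ.quotKerEquivRange.symm.toLinearMap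
  have hM (w : range Φ) (x : S) (hx : Φ x = w) : M w = Φ (T x) := by
    obtain rfl : w = ⟨Φ x, mem_range_self Φ x⟩ := Subtype.ext hx.symm
    simp [M, quotKerEquivRange_symm_apply_image]
  let Mc := ContinuousLinearMap.ofSeqClosedGraph (g := M) fun u w v hu hMu => by
    choose s hs using fun n => (u n).2
    obtain ⟨y, hy⟩ := w.2
    obtain ⟨z, rfl⟩ : v ∈ range Φ := hΦ.mem_of_tendsto hMu
      (Eventually.of_forall fun n => by simp [hM (u n) (s n) (hs n)])
    rw [hM w y hy]
    refine (hT s y z ?_ ?_).symm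
    · simpa [Function.comp_def, hs, hy] using (continuous_subtype_val.tendsto w).comp hu
    · simpa [Function.comp_def, hM _ _ (hs _)] using hMu
  obtain ⟨C, hC, hbound⟩ := Mc.bound
  refine ⟨C, hC, fun x => ?_⟩
  simpa [Mc, hM ⟨Φ x, mem_range_self Φ x⟩ x rfl] using hbound ⟨Φ x, mem_range_self Φ x⟩

lemma norm_iterate_le {S V : Type*} [Norm V] (Φ : S → V) (T : S → S) {C : ℝ} (hC : 0 ≤ C)
    (h : ∀ x, ‖Φ (T x)‖ ≤ C * ‖Φ x‖) (n : ℕ) (x : S) : ‖Φ (T^[n] x)‖ ≤ C ^ n * ‖Φ x‖ := by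
  induction n with
  | zero => simp
  | succ n ih =>
    rw [Function.iterate_succ_apply', pow_succ', mul_assoc]
    exact (h _).trans (mul_le_mul_of_nonneg_left ih hC)

lemma le_of_forall_pow_succ_le_mul_pow {a C K : ℝ} (hC : 0 < C)
    (h : ∀ n : ℕ, a ^ (n + 1) ≤ K * C ^ n) : a ≤ C := by
  by_contra! hCa
  have ha : 0 < a := hC.trans hCa
  obtain ⟨n, hn⟩ := pow_unbounded_of_one_lt (K / a) ((one_lt_div hC).mpr hCa)
  have key := mul_lt_mul_of_pos_right ((div_lt_iff₀' ha).mp hn) (pow_pos hC n)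
  rw [mul_assoc, ← mul_pow, div_mul_cancel₀ a hC.ne', ← pow_succ'] at key
  linarith [h n]

lemma bddAbove_blochSet_iff {f : ℂ → ℂ} :
    BddAbove (blochSet f) ↔ ∃ C, ∀ z ∈ ball (0 : ℂ) 1, (1 - ‖z‖ ^ 2) * ‖deriv f z‖ ≤ C := by
  simp [blochSet, BddAbove, upperBounds, Set.Nonempty]

lemma one_sub_norm_sq_pos {z : ℂ} (hz : z ∈ ball (0 : ℂ) 1) : 0 < 1 - ‖z‖ ^ 2 := by
  have : ‖z‖ < 1 := mem_ball_zero_iff.mp hz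
  nlinarith [norm_nonneg z]

noncomputable def blochSpace : Submodule ℂ (ℂ → ℂ) where
  carrier := {f | DifferentiableOn ℂ f (ball 0 1) ∧ BddAbove (blochSet f)}
  add_mem' := by
    rintro f g ⟨hf, hfb⟩ ⟨hg, hgb⟩
    obtain ⟨C, hC⟩ := bddAbove_blochSet_iff.mp hfb
    obtain ⟨D, hD⟩ := bddAbove_blochSet_iff.mp hgb
    refine ⟨hf.add hg, bddAbove_blochSet_iff.mpr ⟨C + D, fun z hz => ?_⟩⟩
    have hfz := hf.differentiableAt (isOpen_ball.mem_nhds hz)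
    have hgz := hg.differentiableAt (isOpen_ball.mem_nhds hz)
    rw [deriv_add hfz hgz]
    calc (1 - ‖z‖ ^ 2) * ‖deriv f z + deriv g z‖
        ≤ (1 - ‖z‖ ^ 2) * ‖deriv f z‖ + (1 - ‖z‖ ^ 2) * ‖deriv g z‖ := by
          rw [← mul_add]
          exact mul_le_mul_of_nonneg_left (norm_add_le _ _) (one_sub_norm_sq_pos hz).le
      _ ≤ C + D := add_le_add (hC z hz) (hD z hz)
  zero_mem' := ⟨differentiableOn_const 0, bddAbove_blochSet_iff.mpr ⟨0, by simp⟩⟩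
  smul_mem' := by
    rintro c f ⟨hf, hfb⟩
    obtain ⟨C, hC⟩ := bddAbove_blochSet_iff.mp hfb
    refine ⟨hf.const_smul c, bddAbove_blochSet_iff.mpr ⟨‖c‖ * C, fun z hz => ?_⟩⟩
    rw [deriv_const_smul_field, norm_smul, mul_left_comm]
    exact mul_le_mul_of_nonneg_left (hC z hz) (norm_nonneg c)

noncomputable def weightedDeriv (f : ℂ → ℂ) (z : ball (0 : ℂ) 1) : ℂ :=
  ((1 - ‖(z : ℂ)‖ ^ 2 : ℝ) : ℂ) * deriv f z

lemma norm_weightedDeriv (f : ℂ → ℂ) (z : ball (0 : ℂ) 1) :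
    ‖weightedDeriv f z‖ = (1 - ‖(z : ℂ)‖ ^ 2) * ‖deriv f z‖ := by
  rw [weightedDeriv, norm_mul, Complex.norm_real, Real.norm_of_nonneg (one_sub_norm_sq_pos z.2).le]

lemma continuous_weightedDeriv {f : ℂ → ℂ} (hf : DifferentiableOn ℂ f (ball 0 1)) :
    Continuous (weightedDeriv f) := by
  have hd : Continuous fun z : ball (0 : ℂ) 1 => deriv f z :=
    continuousOn_iff_continuous_domRestrict.mp (hf.deriv isOpen_ball).continuousOn
  unfold weightedDeriv
  fun_prop

lemma norm_weightedDeriv_le_sSup {f : ℂ → ℂ} (hf : BddAbove (blochSet f)) (z : ball (0 : ℂ) 1) :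
    ‖weightedDeriv f z‖ ≤ sSup (blochSet f) :=
  (norm_weightedDeriv f z).trans_le (le_csSup hf ⟨z, z.2, rfl⟩)

/-- `f ↦ (f 0, (1 - ‖z‖²) f' z)` embeds the Bloch norm, up to a factor `2`, into a Banach space.
It forgets the values of `f` off the disc, so it is not injective. -/
noncomputable def blochMap : blochSpace →ₗ[ℂ] ℂ × (ball (0 : ℂ) 1 →ᵇ ℂ) where
  toFun f := ((f : ℂ → ℂ) 0, .ofNormedAddCommGroup (weightedDeriv f)
    (continuous_weightedDeriv f.2.1) _ (norm_weightedDeriv_le_sSup f.2.2))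
  map_add' f g := by
    refine Prod.ext rfl (BoundedContinuousFunction.ext fun z => ?_)
    have hfz := f.2.1.differentiableAt (isOpen_ball.mem_nhds z.2)
    have hgz := g.2.1.differentiableAt (isOpen_ball.mem_nhds z.2)
    simp [weightedDeriv, deriv_add hfz hgz, mul_add]
  map_smul' c f := by
    refine Prod.ext rfl (BoundedContinuousFunction.ext fun z => ?_)
    simp [weightedDeriv, deriv_const_smul_field, mul_left_comm]

@[simp]
lemma blochMap_fst (f : blochSpace) : (blochMap f).1 = (f : ℂ → ℂ) 0 := rfl

@[simp]
lemma blochMap_snd_apply (f : blochSpace) (z : ball (0 : ℂ) 1) :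
    (blochMap f).2 z = weightedDeriv f z := rfl

namespace blochSpace

lemma norm_sub_apply_zero_le (f : blochSpace) {r : ℝ} (hr : r < 1) {z : ℂ} (hz : ‖z‖ ≤ r) :
    ‖(f : ℂ → ℂ) z - (f : ℂ → ℂ) 0‖ ≤ r / (1 - r ^ 2) * ‖(blochMap f).2‖ := by
  have hr0 : 0 ≤ r := (norm_nonneg z).trans hz
  have hw : 0 < 1 - r ^ 2 := by nlinarith
  have hsub : closedBall (0 : ℂ) r ⊆ ball 0 1 := closedBall_subset_ball hr
  have bound : ∀ w ∈ closedBall (0 : ℂ) r,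
      ‖deriv (f : ℂ → ℂ) w‖ ≤ ‖(blochMap f).2‖ / (1 - r ^ 2) := by
    intro w hwr
    have hwr' : ‖w‖ ≤ r := mem_closedBall_zero_iff.mp hwr
    rw [le_div_iff₀ hw]
    calc ‖deriv (f : ℂ → ℂ) w‖ * (1 - r ^ 2) ≤ (1 - ‖w‖ ^ 2) * ‖deriv (f : ℂ → ℂ) w‖ := by
          rw [mul_comm]; gcongr
      _ = ‖(blochMap f).2 ⟨w, hsub hwr⟩‖ := by rw [blochMap_snd_apply, norm_weightedDeriv]
      _ ≤ ‖(blochMap f).2‖ := norm_coe_le_norm _ _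
  calc _ ≤ ‖(blochMap f).2‖ / (1 - r ^ 2) * ‖z - 0‖ :=
        (convex_closedBall 0 r).norm_image_sub_le_of_norm_deriv_le
          (fun w hw => f.2.1.differentiableAt (isOpen_ball.mem_nhds (hsub hw))) bound
          (mem_closedBall_self hr0) (mem_closedBall_zero_iff.mpr hz)
    _ ≤ ‖(blochMap f).2‖ / (1 - r ^ 2) * r := by rw [sub_zero]; gcongr
    _ = r / (1 - r ^ 2) * ‖(blochMap f).2‖ := by ring

lemma norm_apply_le (f : blochSpace) {r : ℝ} (hr : r < 1) {z : ℂ} (hz : ‖z‖ ≤ r) :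
    ‖(f : ℂ → ℂ) z‖ ≤ (1 + r / (1 - r ^ 2)) * ‖blochMap f‖ := by
  have hr0 : 0 ≤ r := (norm_nonneg z).trans hz
  have hw : 0 < 1 - r ^ 2 := by nlinarith
  calc ‖(f : ℂ → ℂ) z‖ ≤ ‖(f : ℂ → ℂ) 0‖ + ‖(f : ℂ → ℂ) z - (f : ℂ → ℂ) 0‖ :=
        norm_le_norm_add_norm_sub' _ _
    _ ≤ ‖blochMap f‖ + r / (1 - r ^ 2) * ‖blochMap f‖ :=
        add_le_add (norm_fst_le (blochMap f)) ((norm_sub_apply_zero_le f hr hz).trans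
          (mul_le_mul_of_nonneg_left (norm_snd_le _) (by positivity)))
    _ = (1 + r / (1 - r ^ 2)) * ‖blochMap f‖ := by ring

lemma dist_apply_le (f g : blochSpace) {r : ℝ} (hr : r < 1) {z : ℂ} (hz : ‖z‖ ≤ r) :
    dist ((f : ℂ → ℂ) z) ((g : ℂ → ℂ) z) ≤
      (1 + r / (1 - r ^ 2)) * dist (blochMap f) (blochMap g) := by
  simpa [dist_eq_norm] using norm_apply_le (f - g) hr hz

lemma uniformCauchySeqOn_closedBall {u : ℕ → blochSpace} (hu : CauchySeq fun n => blochMap (u n))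
    {r : ℝ} (hr0 : 0 ≤ r) (hr : r < 1) :
    UniformCauchySeqOn (fun n => (u n : ℂ → ℂ)) atTop (closedBall 0 r) := by
  have hK : 0 < 1 + r / (1 - r ^ 2) := by
    have : 0 < 1 - r ^ 2 := by nlinarith
    positivity
  rw [Metric.uniformCauchySeqOn_iff]
  intro ε hε
  obtain ⟨N, hN⟩ := Metric.cauchySeq_iff.mp hu (ε / (1 + r / (1 - r ^ 2))) (by positivity)
  refine ⟨N, fun m hm n hn z hz => ?_⟩
  calc dist ((u m : ℂ → ℂ) z) ((u n : ℂ → ℂ) z)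
      ≤ (1 + r / (1 - r ^ 2)) * dist (blochMap (u m)) (blochMap (u n)) :=
        dist_apply_le _ _ hr (mem_closedBall_zero_iff.mp hz)
    _ < (1 + r / (1 - r ^ 2)) * (ε / (1 + r / (1 - r ^ 2))) := by gcongr; exact hN m hm n hn
    _ = ε := mul_div_cancel₀ ε hK.ne'

lemma exists_tendstoLocallyUniformlyOn_of_cauchySeq {u : ℕ → blochSpace}
    (hu : CauchySeq fun n => blochMap (u n)) :
    ∃ F : ℂ → ℂ, TendstoLocallyUniformlyOn (fun n => (u n : ℂ → ℂ)) F atTop (ball 0 1) := by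
  have hcauchy : ∀ z ∈ ball (0 : ℂ) 1, CauchySeq fun n => (u n : ℂ → ℂ) z := fun z hz =>
    (uniformCauchySeqOn_closedBall hu (norm_nonneg z) (mem_ball_zero_iff.mp hz)).cauchySeq
      (mem_closedBall_zero_iff.mpr le_rfl)
  refine ⟨fun z => limUnder atTop fun n => (u n : ℂ → ℂ) z,
    tendstoLocallyUniformlyOn_of_forall_exists_nhds fun x hx => ?_⟩
  obtain ⟨r, hxr, hr⟩ := exists_between (mem_ball_zero_iff.mp hx)
  have hsub : closedBall (0 : ℂ) r ⊆ ball 0 1 := closedBall_subset_ball hr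
  refine ⟨closedBall 0 r, mem_nhdsWithin_of_mem_nhds
    (closedBall_mem_nhds_of_mem (mem_ball_zero_iff.mpr hxr)), ?_⟩
  exact (uniformCauchySeqOn_closedBall hu ((norm_nonneg x).trans hxr.le) hr)
    |>.tendstoUniformlyOn_of_tendsto fun z hz => (hcauchy z (hsub hz)).tendsto_limUnder

end blochSpace

open blochSpace

lemma blochMap_congr {f g : blochSpace} (h : Set.EqOn (f : ℂ → ℂ) g (ball 0 1)) :
    blochMap f = blochMap g := by
  refine Prod.ext (h (mem_ball_self one_pos)) (BoundedContinuousFunction.ext fun z => ?_)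
  have : (f : ℂ → ℂ) =ᶠ[𝓝 (z : ℂ)] g := eventually_of_mem (isOpen_ball.mem_nhds z.2) h
  simp [weightedDeriv, this.deriv_eq]

lemma tendsto_apply_of_tendsto_blochMap {ι : Type*} {l : Filter ι} {u : ι → blochSpace}
    {f : blochSpace} (h : Tendsto (fun n => blochMap (u n)) l (𝓝 (blochMap f))) {z : ℂ}
    (hz : z ∈ ball (0 : ℂ) 1) : Tendsto (fun n => (u n : ℂ → ℂ) z) l (𝓝 ((f : ℂ → ℂ) z)) := by
  have hz1 : ‖z‖ < 1 := mem_ball_zero_iff.mp hz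
  refine tendsto_iff_dist_tendsto_zero.mpr (squeeze_zero (fun _ => dist_nonneg)
    (fun n => dist_apply_le (u n) f hz1 le_rfl) ?_)
  simpa using (tendsto_iff_dist_tendsto_zero.mp h).const_mul (1 + ‖z‖ / (1 - ‖z‖ ^ 2))

theorem exists_blochMap_eq_of_tendsto {u : ℕ → blochSpace} {v : ℂ × (ball (0 : ℂ) 1 →ᵇ ℂ)}
    (h : Tendsto (fun n => blochMap (u n)) atTop (𝓝 v)) : ∃ f, blochMap f = v := by
  obtain ⟨F, hF⟩ := exists_tendstoLocallyUniformlyOn_of_cauchySeq h.cauchySeq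
  have hdiff : ∀ᶠ n in atTop, DifferentiableOn ℂ (u n : ℂ → ℂ) (ball 0 1) :=
    Eventually.of_forall fun n => (u n).2.1
  have hderiv : ∀ z ∈ ball (0 : ℂ) 1,
      Tendsto (fun n => deriv (u n : ℂ → ℂ) z) atTop (𝓝 (deriv F z)) := fun z hz =>
    (hF.deriv hdiff isOpen_ball).tendsto_at hz
  have hweighted (z : ball (0 : ℂ) 1) : weightedDeriv F z = v.2 z :=
    tendsto_nhds_unique ((hderiv z z.2).const_mul _)
      (((continuous_eval_const z).tendsto _).comp ((continuous_snd.tendsto _).comp h))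
  have hFB : F ∈ blochSpace := by
    refine ⟨hF.differentiableOn hdiff isOpen_ball,
      bddAbove_blochSet_iff.mpr ⟨‖v.2‖, fun z hz => ?_⟩⟩
    rw [← norm_weightedDeriv F ⟨z, hz⟩, hweighted]
    exact norm_coe_le_norm _ _
  refine ⟨⟨F, hFB⟩, Prod.ext ?_ (BoundedContinuousFunction.ext hweighted)⟩
  exact tendsto_nhds_unique (hF.tendsto_at (mem_ball_self one_pos))
    ((continuous_fst.tendsto _).comp h)

lemma sSup_blochSet_le_norm (f : blochSpace) : sSup (blochSet f) ≤ ‖(blochMap f).2‖ := by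
  refine csSup_le ⟨_, 0, mem_ball_self one_pos, rfl⟩ ?_
  rintro _ ⟨z, hz, rfl⟩
  have := norm_coe_le_norm (blochMap f).2 ⟨z, hz⟩
  rwa [blochMap_snd_apply, norm_weightedDeriv] at this

lemma blochDist_le_two_mul_dist (f g : blochSpace) :
    blochDist f g ≤ 2 * dist (blochMap f) (blochMap g) := by
  rw [dist_eq_norm, ← map_sub]
  calc blochDist f g = ‖(blochMap (f - g)).1‖ + sSup (blochSet (f - g : blochSpace)) := rfl
    _ ≤ ‖blochMap (f - g)‖ + ‖blochMap (f - g)‖ :=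
        add_le_add (norm_fst_le _) ((sSup_blochSet_le_norm _).trans (norm_snd_le _))
    _ = 2 * ‖blochMap (f - g)‖ := by ring

lemma isClosed_range_blochMap_comp_inclusion {S : Submodule ℂ (ℂ → ℂ)} (hS : S ≤ blochSpace)
    (hclosed : ∀ g : blochSpace, (∀ ε > 0, ∃ f ∈ S, blochDist f g < ε) → (g : ℂ → ℂ) ∈ S) :
    IsClosed (Set.range (blochMap ∘ₗ Submodule.inclusion hS)) := by
  refine isClosed_of_closure_subset fun v hv => ?_
  obtain ⟨w, hw, hwv⟩ := mem_closure_iff_seq_limit.mp hv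
  choose s hs using hw
  let u n := Submodule.inclusion hS (s n)
  have hu : Tendsto (fun n => blochMap (u n)) atTop (𝓝 v) := by
    convert hwv using 1
    exact funext hs
  obtain ⟨g, rfl⟩ := exists_blochMap_eq_of_tendsto hu
  have hgS : (g : ℂ → ℂ) ∈ S := hclosed g fun ε hε => by
    obtain ⟨n, hn⟩ := ((tendsto_iff_dist_tendsto_zero.mp hu).eventually
      (gt_mem_nhds (half_pos hε))).exists
    exact ⟨u n, (s n).2, (blochDist_le_two_mul_dist (u n) g).trans_lt (by linarith)⟩
  exact ⟨⟨g, hgS⟩, rfl⟩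

lemma blochMap_eq_of_tendsto_mul {f : ℂ → ℂ} {u v : ℕ → blochSpace} {g h k : blochSpace}
    (hv : ∀ n, (v n : ℂ → ℂ) = f * u n) (hk : (k : ℂ → ℂ) = f * g)
    (hu : Tendsto (fun n => blochMap (u n)) atTop (𝓝 (blochMap g)))
    (hvh : Tendsto (fun n => blochMap (v n)) atTop (𝓝 (blochMap h))) :
    blochMap k = blochMap h :=
  blochMap_congr fun z hz => tendsto_nhds_unique
    (by simpa [hk, hv] using ((tendsto_apply_of_tendsto_blochMap hu hz).const_mul (f z)))
    (tendsto_apply_of_tendsto_blochMap hvh hz)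

lemma norm_le_of_norm_blochMap_mul_le {S : Submodule ℂ (ℂ → ℂ)} (hS : S ≤ blochSpace)
    {f : ℂ → ℂ} (hf : f ∈ S) (T : S → S) (hTf : ∀ g, (T g : ℂ → ℂ) = f * g) {C : ℝ} (hC : 0 < C)
    (hT : ∀ g, ‖blochMap (Submodule.inclusion hS (T g))‖ ≤
      C * ‖blochMap (Submodule.inclusion hS g)‖)
    {z : ℂ} (hz : z ∈ ball (0 : ℂ) 1) : ‖f z‖ ≤ C := by
  let Φ g := blochMap (Submodule.inclusion hS g)
  let f₀ : S := ⟨f, hf⟩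
  have hpow (n : ℕ) : ((T^[n] f₀ : S) : ℂ → ℂ) = f ^ (n + 1) := by
    induction n with
    | zero => simp [f₀]
    | succ n ih => rw [Function.iterate_succ_apply', hTf, ih, ← pow_succ']
  set K := 1 + ‖z‖ / (1 - ‖z‖ ^ 2)
  have hK : 0 ≤ K := by have := one_sub_norm_sq_pos hz; positivity
  refine le_of_forall_pow_succ_le_mul_pow (K := K * ‖Φ f₀‖) hC fun n => ?_
  calc ‖f z‖ ^ (n + 1) = ‖((T^[n] f₀ : S) : ℂ → ℂ) z‖ := by simp [hpow]
    _ ≤ K * ‖Φ (T^[n] f₀)‖ :=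
        norm_apply_le (Submodule.inclusion hS (T^[n] f₀)) (mem_ball_zero_iff.mp hz) le_rfl
    _ ≤ K * (C ^ n * ‖Φ f₀‖) := mul_le_mul_of_nonneg_left (norm_iterate_le Φ T hC.le hT n f₀) hK
    _ = K * ‖Φ f₀‖ * C ^ n := by ring

/-- A subalgebra of the Bloch space that is closed in the Bloch norm consists of
bounded functions. -/
theorem stmt10 (A : Set (ℂ → ℂ))
    (hBloch : ∀ f ∈ A, DifferentiableOn ℂ f (Metric.ball 0 1) ∧ BddAbove (blochSet f))
    (hadd : ∀ f ∈ A, ∀ g ∈ A, (fun z => f z + g z) ∈ A)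
    (hsmul : ∀ (c : ℂ), ∀ f ∈ A, (fun z => c * f z) ∈ A)
    (hmul : ∀ f ∈ A, ∀ g ∈ A, (fun z => f z * g z) ∈ A)
    (hclosed : ∀ g : ℂ → ℂ, DifferentiableOn ℂ g (Metric.ball 0 1) → BddAbove (blochSet g) →
      (∀ ε : ℝ, 0 < ε → ∃ f ∈ A, blochDist f g < ε) → g ∈ A) :
    ∀ f ∈ A, BddAbove ((fun z : ℂ => ‖f z‖) '' Metric.ball 0 1) := by
  intro f hf
  let S : Submodule ℂ (ℂ → ℂ) :=
    { carrier := A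
      add_mem' := fun {g h} hg hh => hadd g hg h hh
      zero_mem' := by
        show (fun _ => 0) ∈ A
        simpa only [zero_mul] using hsmul 0 f hf
      smul_mem' := hsmul }
  have hSB : S ≤ blochSpace := hBloch
  let Φ := blochMap ∘ₗ Submodule.inclusion hSB
  let T : S →ₗ[ℂ] S := (LinearMap.mulLeft ℂ f).restrict fun g hg => hmul f hf g hg
  obtain ⟨C, hC, hT⟩ := exists_pos_bound_of_closed_graph Φ T
    (isClosed_range_blochMap_comp_inclusion hSB fun g hg => hclosed g g.2.1 g.2.2 hg)
    fun u g h hu hTu => blochMap_eq_of_tendsto_mul (fun _ => rfl) rfl hu hTu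
  refine ⟨C, ?_⟩
  rintro _ ⟨z, hz, rfl⟩
  exact norm_le_of_norm_blochMap_mul_le hSB hf T (fun _ => rfl) hC hT hz
end
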